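/- arXiv:0707.3010 — 3 statements merged into one kernel-verified Lean document; each statement's English description precedes it below -/
import Mathlib

section
/- Let d ≥ 1 and 0 ≤ j < k ≤ d be integers. Working in the polynomial ring ℝ[X,Y], set P_m = (X−m)² + Y², R_m = (X−m−1+d)² + Y², and Q_m = P_m + R_m − d(d−1), and let D_{j,k} ∈ ℝ[X,Y] be the determinant of the (k−j−1)×(k−j−1) tridiagonal matrix with diagonal entries −Q_j, …, −Q_{k−2}, subdiagonal entries R_j, …, R_{k−3}, and superdiagonal entries P_{j+1}, …, P_{k−2} (with D_{j,j+1} = 1). Then the homogeneous component of total degree 2(k−j−1) of D_{j,k} equals (−1)^{k−j−1} · (k−j) · (X² + Y²)^{k−j−1}. -/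
/-! Every entry of the tridiagonal matrix has total degree at most 2, and the top homogeneous
component of a product of polynomials of bounded degree is the product of their top components.
Hence the degree-`2n` component of the determinant is the determinant of the matrix of
degree-2 components, which is `S = X² + Y²` off the diagonal and `-2S` on it. That matrix is
`S` times the tridiagonal `(1, -2, 1)` matrix, whose determinant satisfies
`Dₙ₊₂ = -2 Dₙ₊₁ - Dₙ` and so equals `(-1)ⁿ (n + 1)`. -/

open MvPolynomial

/-- The `n × n` tridiagonal matrix with diagonal `-q j, …, -q (j+n-1)`,
superdiagonal `p (j+1), …, p (j+n-1)` and subdiagonal `r (j), …, r (j+n-2)`. -/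
def tridiag {R : Type*} [CommRing R] (p q r : ℕ → R) (j n : ℕ) :
    Matrix (Fin n) (Fin n) R :=
  Matrix.of fun a b =>
    if (a : ℕ) = b then -q (j + a)
    else if (a : ℕ) + 1 = b then p (j + b)
    else if (b : ℕ) + 1 = a then r (j + b)
    else 0

/-- `P_m = (X - m)² + Y²` in `ℝ[X,Y]`. -/
noncomputable def Pm (m : ℕ) : MvPolynomial (Fin 2) ℝ :=
  (X 0 - C (m : ℝ)) ^ 2 + (X 1) ^ 2

/-- `R_m = (X - m - 1 + d)² + Y²` in `ℝ[X,Y]`. -/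
noncomputable def Rm (d m : ℕ) : MvPolynomial (Fin 2) ℝ :=
  (X 0 - C (m : ℝ) - 1 + C (d : ℝ)) ^ 2 + (X 1) ^ 2

/-- `Q_m = P_m + R_m - d(d-1)` in `ℝ[X,Y]`. -/
noncomputable def Qm (d m : ℕ) : MvPolynomial (Fin 2) ℝ :=
  Pm m + Rm d m - C ((d : ℝ) * ((d : ℝ) - 1))

namespace MvPolynomial

section CommSemiring

variable {σ R : Type*} [CommSemiring R]

theorem homogeneousComponent_mul_of_totalDegree_le {f g : MvPolynomial σ R} {m n : ℕ}
    (hf : f.totalDegree ≤ m) (hg : g.totalDegree ≤ n) :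
    homogeneousComponent (m + n) (f * g) =
      homogeneousComponent m f * homogeneousComponent n g := by
  classical
  ext d
  simp only [coeff_homogeneousComponent, coeff_mul]
  split_ifs with hd
  · refine Finset.sum_congr rfl fun x hx => ?_
    have hdeg : x.1.degree + x.2.degree = m + n := by
      rw [← map_add, Finset.HasAntidiagonal.mem_antidiagonal.1 hx, hd]
    -- unless `x.1.degree = m`, one factor has degree above its bound, so its coefficient is 0
    rcases lt_trichotomy x.1.degree m with h1 | h1 | h1
    · rw [coeff_eq_zero_of_totalDegree_lt (hg.trans_lt (by omega : n < x.2.degree))]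
      simp
    · rw [if_pos h1, if_pos (by omega)]
    · rw [coeff_eq_zero_of_totalDegree_lt (hf.trans_lt h1)]
      simp
  · refine (Finset.sum_eq_zero fun x hx => ?_).symm
    split_ifs with h1 h2
    · rw [← Finset.HasAntidiagonal.mem_antidiagonal.1 hx, map_add, h1, h2] at hd
      exact absurd rfl hd
    all_goals simp

theorem homogeneousComponent_prod_of_totalDegree_le {ι : Type*} (s : Finset ι)
    (f : ι → MvPolynomial σ R) (e : ι → ℕ) (h : ∀ i ∈ s, (f i).totalDegree ≤ e i) :
    homogeneousComponent (∑ i ∈ s, e i) (∏ i ∈ s, f i) =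
      ∏ i ∈ s, homogeneousComponent (e i) (f i) := by
  classical
  induction s using Finset.induction with
  | empty => simp
  | insert a s ha ih =>
    have hs : ∀ i ∈ s, (f i).totalDegree ≤ e i :=
      fun i hi => h i (Finset.mem_insert_of_mem hi)
    rw [Finset.sum_insert ha, Finset.prod_insert ha, Finset.prod_insert ha,
      homogeneousComponent_mul_of_totalDegree_le (h a (Finset.mem_insert_self a s))
        ((totalDegree_finsetProd s f).trans (Finset.sum_le_sum hs)), ih hs]

theorem IsHomogeneous.homogeneousComponent_add_of_totalDegree_lt
    {f g : MvPolynomial σ R} {n : ℕ}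
    (hf : f.IsHomogeneous n) (hg : g.totalDegree < n) :
    homogeneousComponent n (f + g) = f := by
  rw [map_add, homogeneousComponent_eq_zero _ _ hg, add_zero,
    homogeneousComponent_of_mem ((mem_homogeneousSubmodule _ _).2 hf), if_pos rfl]

theorem IsHomogeneous.totalDegree_add_le_of_totalDegree_lt {f g : MvPolynomial σ R} {n : ℕ}
    (hf : f.IsHomogeneous n) (hg : g.totalDegree < n) : (f + g).totalDegree ≤ n :=
  (totalDegree_add f g).trans (max_le hf.totalDegree_le hg.le)

theorem totalDegree_C_mul_X_add_C_le (a b : R) (i : σ) :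
    (C a * X i + C b : MvPolynomial σ R).totalDegree ≤ 1 :=
  (totalDegree_add _ _).trans <| max_le
    ((isHomogeneous_C_mul_X a i).totalDegree_le) (by rw [totalDegree_C]; omega)

theorem homogeneousComponent_X_sq_add_X_sq_add_affine (a b : R) (i i' i'' : σ) :
    homogeneousComponent 2 ((X i ^ 2 + X i' ^ 2) + (C a * X i'' + C b)) =
      (X i ^ 2 + X i' ^ 2 : MvPolynomial σ R) :=
  ((isHomogeneous_X_pow i 2).add
    (isHomogeneous_X_pow i' 2)).homogeneousComponent_add_of_totalDegree_lt
    ((totalDegree_C_mul_X_add_C_le a b i'').trans_lt one_lt_two)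

theorem totalDegree_X_sq_add_X_sq_add_affine_le (a b : R) (i i' i'' : σ) :
    ((X i ^ 2 + X i' ^ 2) + (C a * X i'' + C b) : MvPolynomial σ R).totalDegree ≤ 2 :=
  ((isHomogeneous_X_pow i 2).add (isHomogeneous_X_pow i' 2)).totalDegree_add_le_of_totalDegree_lt
    ((totalDegree_C_mul_X_add_C_le a b i'').trans_lt one_lt_two)

end CommSemiring

theorem homogeneousComponent_det_of_totalDegree_le {σ R : Type*} [CommRing R] {n e : ℕ}
    (M : Matrix (Fin n) (Fin n) (MvPolynomial σ R)) (h : ∀ a b, (M a b).totalDegree ≤ e) :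
    homogeneousComponent (e * n) M.det = (M.map (homogeneousComponent e)).det := by
  simp only [Matrix.det_apply, map_sum, Units.smul_def, map_zsmul, Matrix.map_apply]
  refine Finset.sum_congr rfl fun τ _ => ?_
  have hsum : e * n = ∑ _i : Fin n, e := by simp [mul_comm]
  rw [hsum, homogeneousComponent_prod_of_totalDegree_le _ _ _ fun i _ => h _ _]

end MvPolynomial

theorem Matrix.det_succ_of_forall_succ_zero_eq_zero {R : Type*} [CommRing R] {n : ℕ}
    (A : Matrix (Fin (n + 1)) (Fin (n + 1)) R) (h : ∀ i : Fin n, A i.succ 0 = 0) :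
    A.det = A 0 0 * (A.submatrix Fin.succ Fin.succ).det := by
  rw [Matrix.det_succ_column_zero, Fin.sum_univ_succ]
  simp [h]

section Tridiag

variable {R : Type*} [CommRing R] (p q r : ℕ → R)

theorem tridiag_submatrix_succ (j n : ℕ) :
    (tridiag p q r j (n + 1)).submatrix Fin.succ Fin.succ = tridiag p q r (j + 1) n := by
  ext a b
  simp only [tridiag, Matrix.submatrix_apply, Matrix.of_apply, Fin.val_succ]
  split_ifs <;> grind

theorem det_tridiag_succ_succ (j n : ℕ) :
    (tridiag p q r j (n + 2)).det =
      -q j * (tridiag p q r (j + 1) (n + 1)).det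
        - p (j + 1) * r j * (tridiag p q r (j + 2) n).det := by
  set A := tridiag p q r j (n + 2)
  have hminor :
      (A.submatrix Fin.succ (Fin.succAbove 1)).det = r j * (tridiag p q r (j + 2) n).det := by
    rw [Matrix.det_succ_of_forall_succ_zero_eq_zero _ fun i => by simp [A, tridiag]]
    have hsub : (A.submatrix Fin.succ (Fin.succAbove 1)).submatrix Fin.succ Fin.succ =
        (A.submatrix Fin.succ Fin.succ).submatrix Fin.succ Fin.succ := by
      ext a b; simp
    rw [hsub, tridiag_submatrix_succ, tridiag_submatrix_succ]
    simp [A, tridiag]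
  rw [Matrix.det_succ_row_zero, Fin.sum_univ_succ, Fin.sum_univ_succ,
    Finset.sum_eq_zero fun i _ => by simp [A, tridiag], Fin.succAbove_zero,
    tridiag_submatrix_succ, Fin.succ_zero_eq_one, hminor]
  simp [A, tridiag]
  ring

theorem det_tridiag_const (s : R) (j n : ℕ) :
    (tridiag (fun _ => s) (fun _ => 2 * s) (fun _ => s) j n).det =
      (-1) ^ n * (n + 1) * s ^ n := by
  induction n using Nat.strong_induction_on generalizing j with
  | _ n ih =>
    match n with
    | 0 => simp
    | 1 => simp [tridiag]; ring
    | n + 2 =>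
      rw [det_tridiag_succ_succ, ih (n + 1) (by omega), ih n (by omega)]
      push_cast
      ring

theorem tridiag_map {S F : Type*} [CommRing S] [FunLike F R S] [AddMonoidHomClass F R S]
    (f : F) (j n : ℕ) :
    (tridiag p q r j n).map f = tridiag (f ∘ p) (f ∘ q) (f ∘ r) j n := by
  ext a b
  simp only [tridiag, Matrix.map_apply, Matrix.of_apply, Function.comp_apply]
  split_ifs <;> simp

theorem totalDegree_tridiag_apply_le {σ : Type*} {p q r : ℕ → MvPolynomial σ R} {e : ℕ}
    (hp : ∀ m, (p m).totalDegree ≤ e) (hq : ∀ m, (q m).totalDegree ≤ e)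
    (hr : ∀ m, (r m).totalDegree ≤ e) (j n : ℕ) (a b : Fin n) :
    (tridiag p q r j n a b).totalDegree ≤ e := by
  simp only [tridiag, Matrix.of_apply]
  split_ifs
  · rw [MvPolynomial.totalDegree_neg]; exact hq _
  · exact hp _
  · exact hr _
  · simp

end Tridiag

theorem Pm_eq (m : ℕ) :
    Pm m = (X 0 ^ 2 + X 1 ^ 2) + (C (-2 * (m : ℝ)) * X 0 + C ((m : ℝ) ^ 2)) := by
  simp only [Pm, map_mul, map_neg, map_pow, map_ofNat]
  ring

theorem Rm_eq (d m : ℕ) :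
    Rm d m = (X 0 ^ 2 + X 1 ^ 2) +
      (C (2 * ((d : ℝ) - m - 1)) * X 0 + C (((d : ℝ) - m - 1) ^ 2)) := by
  simp only [Rm, map_mul, map_sub, map_pow, map_one, map_ofNat]
  ring

theorem totalDegree_Pm_le (m : ℕ) : (Pm m).totalDegree ≤ 2 := by
  rw [Pm_eq]
  exact totalDegree_X_sq_add_X_sq_add_affine_le _ _ _ _ _

theorem totalDegree_Rm_le (d m : ℕ) : (Rm d m).totalDegree ≤ 2 := by
  rw [Rm_eq]
  exact totalDegree_X_sq_add_X_sq_add_affine_le _ _ _ _ _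

theorem totalDegree_Qm_le (d m : ℕ) : (Qm d m).totalDegree ≤ 2 :=
  (totalDegree_sub _ _).trans <| max_le
    ((totalDegree_add _ _).trans (max_le (totalDegree_Pm_le m) (totalDegree_Rm_le d m)))
    (by rw [totalDegree_C]; omega)

theorem homogeneousComponent_two_Pm (m : ℕ) :
    homogeneousComponent 2 (Pm m) = X 0 ^ 2 + X 1 ^ 2 := by
  rw [Pm_eq, homogeneousComponent_X_sq_add_X_sq_add_affine]

theorem homogeneousComponent_two_Rm (d m : ℕ) :
    homogeneousComponent 2 (Rm d m) = X 0 ^ 2 + X 1 ^ 2 := by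
  rw [Rm_eq, homogeneousComponent_X_sq_add_X_sq_add_affine]

theorem homogeneousComponent_two_Qm (d m : ℕ) :
    homogeneousComponent 2 (Qm d m) = 2 * (X 0 ^ 2 + X 1 ^ 2) := by
  rw [Qm, map_sub, map_add, homogeneousComponent_two_Pm, homogeneousComponent_two_Rm,
    homogeneousComponent_eq_zero _ _ (by rw [totalDegree_C]; omega), sub_zero, two_mul]

theorem stmt_10_general (d j k : ℕ) (hjk : j < k) :
    MvPolynomial.homogeneousComponent (2 * (k - j - 1))
        ((tridiag Pm (Qm d) (Rm d) j (k - j - 1)).det)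
      = (-1) ^ (k - j - 1) * ((k - j : ℕ) : MvPolynomial (Fin 2) ℝ) *
          ((X 0) ^ 2 + (X 1) ^ 2) ^ (k - j - 1) := by
  set n := k - j - 1
  have hk : k - j = n + 1 := by omega
  have hdeg := totalDegree_tridiag_apply_le totalDegree_Pm_le (totalDegree_Qm_le d)
    (totalDegree_Rm_le d) j n
  rw [hk, homogeneousComponent_det_of_totalDegree_le _ hdeg, tridiag_map]
  simp only [Function.comp_def, homogeneousComponent_two_Pm, homogeneousComponent_two_Qm,
    homogeneousComponent_two_Rm]
  rw [det_tridiag_const]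
  push_cast
  ring

/-- Lemma 4.1: the top homogeneous component (of degree `2(k-j-1)`) of `D_{j,k}`
for the binomial coefficient basis is `(-1)^{k-j-1} (k-j) (X² + Y²)^{k-j-1}`. -/
theorem stmt_10 (d j k : ℕ) (hd : 1 ≤ d) (hjk : j < k) (hkd : k ≤ d) :
    MvPolynomial.homogeneousComponent (2 * (k - j - 1))
        ((tridiag Pm (Qm d) (Rm d) j (k - j - 1)).det)
      = (-1) ^ (k - j - 1) * ((k - j : ℕ) : MvPolynomial (Fin 2) ℝ) *
          ((X 0) ^ 2 + (X 1) ^ 2) ^ (k - j - 1) :=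
  stmt_10_general d j k hjk
end

section
/- Let d ≥ 1 be an integer, let 0 ≤ j < k ≤ d, and let δ₁, δ₂ be integers with 0 ≤ δ₁ ≤ j and 0 ≤ δ₂ ≤ d−k. Let z be a complex number with Im z > 0 and let l ≥ 1 be an integer. Then: (1) if A(j−δ₁, k+δ₂; z) ≥ (l+δ₁+δ₂)π then A(j,k;z) ≥ lπ; (2) if A(j,k;z) ≥ lπ and l−δ₁−δ₂ ≥ 1 and j+δ₁ < k−δ₂ then A(j+δ₁, k−δ₂; z) ≥ (l−δ₁−δ₂)π; (3) if j+δ₁ < k−δ₂ and A(j+δ₁, k−δ₂; z) ≥ lπ then A(j,k;z) ≥ lπ; (4) if A(j,k;z) ≥ lπ then A(j−δ₁, k+δ₂; z) ≥ lπ. -/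
/-!
In the upper half-plane `arg w = π/2 - arctan (re w / im w)` is strictly decreasing in `re w`, so
for `d ≥ 1` every summand `arg (z - m) - arg (z + d - m)` of the angle sum lies in `(0, π)`.
Enlarging the index range `[j, k)` by `δ₁ + δ₂` indices therefore increases the angle sum by an
amount in `[0, (δ₁ + δ₂) π]`, and all four implications follow.
-/

/-- The angle sum `A(j,k;z) = Σ_{m=j}^{k-1} (arg(z-m) - arg(z+d-m))`. -/
noncomputable def angleSum (d j k : ℕ) (z : ℂ) : ℝ :=
  ∑ m ∈ Finset.Icc j (k - 1), (Complex.arg (z - m) - Complex.arg (z + d - m))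

open Real

theorem Complex.arg_eq_pi_div_two_sub_arctan {w : ℂ} (hw : 0 < w.im) :
    arg w = π / 2 - Real.arctan (w.re / w.im) := by
  have hnorm : ‖w‖ = w.im * √(1 + (w.re / w.im) ^ 2) := by
    have : normSq w = w.im ^ 2 * (1 + (w.re / w.im) ^ 2) := by
      rw [normSq_apply]; field_simp; ring
    rw [norm_def, this, sqrt_mul (sq_nonneg _), sqrt_sq hw.le]
  rw [arg_of_im_pos hw, arccos_eq_pi_div_two_sub_arcsin, hnorm, mul_comm, ← div_div,
    div_right_comm, ← sin_arctan,
    arcsin_sin (neg_pi_div_two_lt_arctan _).le (arctan_lt_pi_div_two _).le]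

theorem Complex.arg_add_ofReal_lt {w : ℂ} (hw : 0 < w.im) {t : ℝ} (ht : 0 < t) :
    arg (w + t) < arg w := by
  have hwt : 0 < (w + t).im := by simpa using hw
  rw [arg_eq_pi_div_two_sub_arctan hw, arg_eq_pi_div_two_sub_arctan hwt,
    add_re, ofReal_re, add_im, ofReal_im, add_zero]
  gcongr
  linarith

noncomputable def angleSummand (d : ℕ) (z : ℂ) (m : ℕ) : ℝ :=
  Complex.arg (z - m) - Complex.arg (z + d - m)

section

variable {d j k j' k' : ℕ} {z : ℂ}

theorem angleSummand_pos (hd : 0 < d) (hz : 0 < z.im) (m : ℕ) : 0 < angleSummand d z m := by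
  have hshift : z + d - m = z - m + (d : ℝ) := by push_cast; ring
  rw [angleSummand, hshift, sub_pos]
  exact Complex.arg_add_ofReal_lt (by simpa using hz) (by exact_mod_cast hd)

theorem angleSummand_lt_pi (hz : 0 < z.im) (m : ℕ) : angleSummand d z m < π := by
  have him : 0 < (z + d - m).im := by simpa using hz
  rw [angleSummand, Complex.arg_eq_pi_div_two_sub_arctan him]
  linarith [Complex.arg_le_pi (z - m), arctan_lt_pi_div_two ((z + d - m).re / (z + d - m).im)]


theorem angleSum_eq_sum_Ico (hk : 0 < k) :
    angleSum d j k z = ∑ m ∈ Finset.Ico j k, angleSummand d z m :=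
  Finset.sum_congr (by ext; simp only [Finset.mem_Icc, Finset.mem_Ico]; omega) fun _ _ => rfl

theorem angleSum_eq_add_add (hj : j' ≤ j) (hjk : j < k) (hk : k ≤ k') :
    angleSum d j' k' z = ∑ m ∈ Finset.Ico j' j, angleSummand d z m + angleSum d j k z +
      ∑ m ∈ Finset.Ico k k', angleSummand d z m := by
  rw [angleSum_eq_sum_Ico (by omega), angleSum_eq_sum_Ico (by omega),
    ← Finset.sum_Ico_consecutive _ hj (hjk.le.trans hk), ← Finset.sum_Ico_consecutive _ hjk.le hk,
    add_assoc]

theorem sum_Ico_angleSummand_le (hz : 0 < z.im) (a b : ℕ) :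
    ∑ m ∈ Finset.Ico a b, angleSummand d z m ≤ (b - a : ℕ) * π := by
  rw [← Nat.card_Ico, ← nsmul_eq_mul]
  exact Finset.sum_le_card_nsmul _ _ _ fun m _ => (angleSummand_lt_pi hz m).le

theorem angleSum_le_angleSum (hd : 0 < d) (hz : 0 < z.im) (hj : j' ≤ j) (hjk : j < k)
    (hk : k ≤ k') : angleSum d j k z ≤ angleSum d j' k' z := by
  have hnonneg (s : Finset ℕ) : 0 ≤ ∑ m ∈ s, angleSummand d z m :=
    Finset.sum_nonneg fun m _ => (angleSummand_pos hd hz m).le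
  linarith [angleSum_eq_add_add (d := d) (z := z) hj hjk hk, hnonneg (Finset.Ico j' j),
    hnonneg (Finset.Ico k k')]

theorem angleSum_le_angleSum_add (hz : 0 < z.im) (hj : j' ≤ j) (hjk : j < k) (hk : k ≤ k') :
    angleSum d j' k' z ≤ angleSum d j k z + ((j - j' + (k' - k) : ℕ) : ℝ) * π := by
  rw [angleSum_eq_add_add hj hjk hk, Nat.cast_add, add_mul]
  linarith [sum_Ico_angleSummand_le (d := d) hz j' j, sum_Ico_angleSummand_le (d := d) hz k k']

end

theorem stmt_13_general (d j k δ₁ δ₂ l : ℕ) (hd : 1 ≤ d) (hjk : j < k)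
    (hδ₁ : δ₁ ≤ j)
    (z : ℂ) (hz : 0 < z.im) :
    (((l + δ₁ + δ₂ : ℕ) : ℝ) * Real.pi ≤ angleSum d (j - δ₁) (k + δ₂) z →
        (l : ℝ) * Real.pi ≤ angleSum d j k z)
    ∧ ((l : ℝ) * Real.pi ≤ angleSum d j k z → 1 ≤ l - δ₁ - δ₂ → j + δ₁ < k - δ₂ →
        ((l - δ₁ - δ₂ : ℕ) : ℝ) * Real.pi ≤ angleSum d (j + δ₁) (k - δ₂) z)
    ∧ (j + δ₁ < k - δ₂ → (l : ℝ) * Real.pi ≤ angleSum d (j + δ₁) (k - δ₂) z →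
        (l : ℝ) * Real.pi ≤ angleSum d j k z)
    ∧ ((l : ℝ) * Real.pi ≤ angleSum d j k z →
        (l : ℝ) * Real.pi ≤ angleSum d (j - δ₁) (k + δ₂) z) := by
  have hwiden :=
    angleSum_le_angleSum_add (d := d) hz (Nat.sub_le j δ₁) hjk (Nat.le_add_right k δ₂)
  rw [show j - (j - δ₁) + (k + δ₂ - k) = δ₁ + δ₂ by omega] at hwiden
  refine ⟨fun h => ?_, fun h hlδ hnarrow => ?_, fun hnarrow h => ?_, fun h => ?_⟩
  · push_cast at h hwiden
    linarith
  · have hshrink :=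
      angleSum_le_angleSum_add (d := d) hz (Nat.le_add_right j δ₁) hnarrow (Nat.sub_le k δ₂)
    rw [show j + δ₁ - j + (k - (k - δ₂)) = δ₁ + δ₂ by omega] at hshrink
    rw [Nat.cast_sub (by omega), Nat.cast_sub (by omega)]
    push_cast at hshrink
    linarith
  · exact h.trans (angleSum_le_angleSum hd hz (Nat.le_add_right j δ₁) hnarrow (Nat.sub_le k δ₂))
  · exact h.trans (angleSum_le_angleSum hd hz (Nat.sub_le j δ₁) hjk (Nat.le_add_right k δ₂))

/-- The nested inclusions (19) and (20) of Proposition 4.7, expressed via the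
angle-sum description of the regions `cl 𝒟_{j,k;l}` in the upper half-plane. -/
theorem stmt_13 (d j k δ₁ δ₂ l : ℕ) (hd : 1 ≤ d) (hjk : j < k) (hkd : k ≤ d)
    (hδ₁ : δ₁ ≤ j) (hδ₂ : δ₂ ≤ d - k) (hl : 1 ≤ l)
    (z : ℂ) (hz : 0 < z.im) :
    (((l + δ₁ + δ₂ : ℕ) : ℝ) * Real.pi ≤ angleSum d (j - δ₁) (k + δ₂) z →
        (l : ℝ) * Real.pi ≤ angleSum d j k z)
    ∧ ((l : ℝ) * Real.pi ≤ angleSum d j k z → 1 ≤ l - δ₁ - δ₂ → j + δ₁ < k - δ₂ →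
        ((l - δ₁ - δ₂ : ℕ) : ℝ) * Real.pi ≤ angleSum d (j + δ₁) (k - δ₂) z)
    ∧ (j + δ₁ < k - δ₂ → (l : ℝ) * Real.pi ≤ angleSum d (j + δ₁) (k - δ₂) z →
        (l : ℝ) * Real.pi ≤ angleSum d j k z)
    ∧ ((l : ℝ) * Real.pi ≤ angleSum d j k z →
        (l : ℝ) * Real.pi ≤ angleSum d (j - δ₁) (k + δ₂) z) :=
  stmt_13_general d j k δ₁ δ₂ l hd hjk hδ₁ z hz
end

section
/- Let d ≥ 1 and 0 ≤ j < k ≤ d be integers, and let z be a complex number with Im z > 0 such that A(j,k;z) = lπ for an integer l with 1 ≤ l ≤ k−j−1. Then the real number Re( C_d(z+d−j) · conj(C_d(z+d−k)) ) is nonzero, and its sign equals (−1)^l; that is, it is positive if l is even and negative if l is odd. -/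
open ComplexConjugate

/-- The binomial coefficient polynomial `C_d(w) = (1/d!) ∏_{i=0}^{d-1} (w - i)`. -/
noncomputable def binomC (d : ℕ) (w : ℂ) : ℂ :=
  (∏ i ∈ Finset.range d, (w - i)) / (Nat.factorial d)

/-!
Write `P_j = C_d(z+d-j)`. Shifting the argument of `C_d` by one gives
`C_d(w+1) (w+1-d) = (w+1) C_d(w)`, hence `P_j X = P_k Y` with `X = ∏_{m=j}^{k-1} (z-m)` and
`Y = ∏_{m=j}^{k-1} (z+d-m)`. Therefore `P_k conj P_j` is a positive multiple of `X conj Y`,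
whose argument is exactly `A(j,k;z) = lπ`; so `Re (P_j conj P_k) = Re (P_k conj P_j)` is a
positive multiple of `(-1)^l`. Every factor involved is nonzero because `Im z > 0`.
-/

open Finset Complex

theorem binomC_add_one_mul (d : ℕ) (w : ℂ) :
    binomC d (w + 1) * (w + 1 - d) = (w + 1) * binomC d w := by
  have h := (prod_range_succ (fun i : ℕ => w + 1 - i) d).symm.trans
    (prod_range_succ' (fun i : ℕ => w + 1 - i) d)
  simp only [Nat.cast_add, Nat.cast_one, Nat.cast_zero, sub_zero, add_sub_add_right_eq_sub] at h
  rw [binomC, binomC, div_mul_eq_mul_div, h]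
  ring

theorem binomC_ne_zero (d : ℕ) {w : ℂ} (hw : w.im ≠ 0) : binomC d w ≠ 0 := by
  refine div_ne_zero (prod_ne_zero_iff.mpr fun i _ h => hw ?_) (Nat.cast_ne_zero.mpr ?_)
  · simpa using congrArg im h
  · exact d.factorial_ne_zero

theorem binomC_mul_prod_Ico (d : ℕ) (z : ℂ) {j k : ℕ} (hjk : j ≤ k) :
    binomC d (z + d - j) * ∏ m ∈ Ico j k, (z - m) =
      binomC d (z + d - k) * ∏ m ∈ Ico j k, (z + d - m) := by
  induction k, hjk using Nat.le_induction with
  | base => simp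
  | succ k hjk ih =>
    have hshift := binomC_add_one_mul d (z + d - (k + 1 : ℕ))
    rw [show z + d - ((k + 1 : ℕ) : ℂ) + 1 = z + d - k by push_cast; ring,
      show z + d - (k : ℂ) - d = z - k by ring] at hshift
    rw [prod_Ico_succ_top hjk, prod_Ico_succ_top hjk, ← mul_assoc, ih, mul_right_comm, hshift]
    ring

theorem mul_conj_eq_of_mul_eq {a b x y : ℂ} (h : a * x = b * y) (hx : x ≠ 0) :
    b * conj a = ((‖b‖ / ‖x‖) ^ 2 : ℝ) * (x * conj y) := by
  have hnx : (‖x‖ : ℂ) ≠ 0 := by simpa using hx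
  have hcx : conj x ≠ 0 := (map_ne_zero _).mpr hx
  rw [eq_div_of_mul_eq hx h, map_div₀, map_mul]
  push_cast
  field_simp
  rw [← mul_conj', ← mul_conj']
  ring

theorem prod_mul_conj_eq {ι : Type*} (s : Finset ι) (f g : ι → ℂ) :
    ∏ i ∈ s, f i * conj (g i) =
      ((∏ i ∈ s, ‖f i‖ * ‖g i‖ : ℝ) : ℂ) *
        exp ((∑ i ∈ s, (arg (f i) - arg (g i)) : ℝ) * I) := by
  have hfactor : ∀ i ∈ s, f i * conj (g i) =
      ((‖f i‖ * ‖g i‖ : ℝ) : ℂ) * exp ((arg (f i) - arg (g i) : ℝ) * I) := by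
    intro i _
    conv_lhs => rw [← norm_mul_exp_arg_mul_I (f i), ← norm_mul_exp_arg_mul_I (g i)]
    rw [map_mul, ← exp_conj, map_mul, conj_ofReal, conj_ofReal, conj_I]
    push_cast
    rw [sub_mul, sub_eq_add_neg, exp_add]
    ring_nf
  rw [prod_congr rfl hfactor, prod_mul_distrib, ← exp_sum, ofReal_prod, ofReal_sum, sum_mul]

theorem sign_mul_neg_one_pow {c : ℝ} (hc : 0 < c) (l : ℕ) :
    c * (-1) ^ l ≠ 0 ∧ Real.sign (c * (-1) ^ l) = (-1) ^ l := by
  rcases l.even_or_odd with hl | hl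
  · simp [hl.neg_one_pow, hc.ne', Real.sign_of_pos hc]
  · simp [hl.neg_one_pow, hc.ne', Real.sign_of_neg (neg_neg_of_pos hc)]

theorem stmt_15_general (d j k l : ℕ) (hjk : j < k) (z : ℂ) (hz : 0 < z.im)
    (hA : angleSum d j k z = l * Real.pi) :
    (binomC d (z + d - j) * conj (binomC d (z + d - k))).re ≠ 0 ∧
      Real.sign ((binomC d (z + d - j) * conj (binomC d (z + d - k))).re)
        = (-1 : ℝ) ^ l := by
  have hne : ∀ w : ℂ, w.im = z.im → w ≠ 0 := fun w hw h => by simp [h, hz.ne] at hw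
  have hX : ∏ m ∈ Ico j k, (z - m) ≠ 0 := prod_ne_zero_iff.mpr fun m _ => hne _ (by simp)
  have hangle : ∑ m ∈ Ico j k, (arg (z - m) - arg (z + d - m)) = l * Real.pi := by
    rw [← hA, angleSum, Icc_sub_one_right_eq_Ico_of_not_isMin (by simpa using hjk.ne_bot)]
  have hsym := mul_conj_eq_of_mul_eq (binomC_mul_prod_Ico d z hjk.le) hX
  rw [map_prod, ← prod_mul_distrib, prod_mul_conj_eq, hangle] at hsym
  set c : ℝ := (‖binomC d (z + d - k)‖ / ‖∏ m ∈ Ico j k, (z - m)‖) ^ 2 *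
    ∏ m ∈ Ico j k, ‖z - m‖ * ‖z + d - m‖
  have hc : 0 < c := by
    refine mul_pos (pow_pos (div_pos ?_ (norm_pos_iff.mpr hX)) 2) (prod_pos fun m _ => ?_)
    · exact norm_pos_iff.mpr (binomC_ne_zero d (by simp [hz.ne']))
    · exact mul_pos (norm_pos_iff.mpr (hne _ (by simp))) (norm_pos_iff.mpr (hne _ (by simp)))
  have hre : (binomC d (z + d - j) * conj (binomC d (z + d - k))).re = c * (-1) ^ l := by
    have hexp : exp ((l * Real.pi : ℝ) * I) = ((-1 : ℝ) ^ l : ℝ) := by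
      push_cast
      rw [mul_assoc, exp_nat_mul, exp_pi_mul_I]
    rw [← conj_re, map_mul, conj_conj, mul_comm, hsym, hexp, ← mul_assoc, ← ofReal_mul,
      ← ofReal_mul, ofReal_re]
  rw [hre]
  exact sign_mul_neg_one_pow hc l

/-- Lemma 4.9: on the `l`-th oval `𝒟_{j,k;l}`, the dot product
`w_j(z) · w_k(z) = Re(C_d(z+d-j) · conj(C_d(z+d-k)))` is nonzero with sign `(-1)^l`. -/
theorem stmt_15 (d j k l : ℕ) (hd : 1 ≤ d) (hjk : j < k) (hkd : k ≤ d)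
    (hl : 1 ≤ l) (hl' : l ≤ k - j - 1) (z : ℂ) (hz : 0 < z.im)
    (hA : angleSum d j k z = l * Real.pi) :
    (binomC d (z + d - j) * conj (binomC d (z + d - k))).re ≠ 0 ∧
      Real.sign ((binomC d (z + d - j) * conj (binomC d (z + d - k))).re)
        = (-1 : ℝ) ^ l :=
  stmt_15_general d j k l hjk z hz hA
end
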